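/- arXiv:2110.01998 — 2 statements merged into one kernel-verified Lean document; each statement's English description precedes it below -/
import Mathlib

section
/- For Δ > 1/2, the lacunary function g(t) = Σ_{k=1}^∞ k^{−2Δ}·exp(i·2^k·t) has modulus of continuity bounded below: there exists C₁ > 0 such that ω[g](δ) ≥ C₁·|ln δ|^{−2Δ} for all δ ∈ (0, 1/e). -/
/-!
At the scale `h = π / 2^(n+1)` the increment `g(h/2) - g(-h/2)` equals
`2i Σ_k k^{-2Δ} sin(2^(k-1) h)`. Every sine in this sum is nonnegative (the angles
`2^j π / 2^(n+1)` lie in `[0, π]` for `j ≤ n` and are multiples of `π` beyond), and the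
`k = n + 1` term is `sin(π/2) = 1`, so the increment has size at least `2 (n+1)^{-2Δ}`.
Choosing `n` with `2^n ≤ π/δ < 2^(n+1)` gives `h ≤ δ` and `n + 1 ≤ 5 |ln δ|`.
-/

open Complex Real

/-- The lacunary function `g(t) = Σ_{k=1}^∞ k^{-2Δ} exp(i 2^k t)`. -/
noncomputable def lacFun (Δ : ℝ) (t : ℝ) : ℂ :=
  ∑' k : ℕ, (((k : ℝ) + 1) ^ (-(2 * Δ)) : ℝ) *
    Complex.exp (Complex.I * (2 : ℂ) ^ (k + 1) * (t : ℂ))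

/-- Modulus of continuity of a complex-valued function on ℝ. -/
noncomputable def modCont (f : ℝ → ℂ) (δ : ℝ) : ℝ :=
  sSup {y : ℝ | ∃ t h : ℝ, |h| ≤ δ ∧ y = ‖f (t + h) - f t‖}

theorem norm_sub_le_modCont {f : ℝ → ℂ} {C : ℝ} (hf : ∀ t, ‖f t‖ ≤ C) {δ t h : ℝ}
    (hh : |h| ≤ δ) :
    ‖f (t + h) - f t‖ ≤ modCont f δ := by
  refine le_csSup ⟨C + C, ?_⟩ ⟨t, h, hh, rfl⟩
  rintro y ⟨t', h', -, rfl⟩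
  exact (norm_sub_le _ _).trans (add_le_add (hf _) (hf _))

noncomputable def lacunarySeries (a : ℕ → ℝ) (t : ℝ) : ℂ :=
  ∑' k : ℕ, (a k : ℂ) * Complex.exp (Complex.I * 2 ^ (k + 1) * t)

theorem summable_nat_add_one_rpow {p : ℝ} (hp : p < -1) :
    Summable fun k : ℕ => ((k : ℝ) + 1) ^ p := by
  simpa only [Nat.cast_add, Nat.cast_one] using
    (summable_nat_add_iff 1).2 (Real.summable_nat_rpow.2 hp)

theorem lacFun_eq_lacunarySeries (Δ : ℝ) :
    lacFun Δ = lacunarySeries fun k => ((k : ℝ) + 1) ^ (-(2 * Δ)) :=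
  rfl

namespace lacunarySeries

variable {a : ℕ → ℝ}

theorem norm_term (k : ℕ) (t : ℝ) :
    ‖(a k : ℂ) * Complex.exp (Complex.I * 2 ^ (k + 1) * t)‖ = |a k| := by
  rw [norm_mul, Complex.norm_real, Real.norm_eq_abs, ← Complex.ofReal_ofNat, ← Complex.ofReal_pow,
    mul_comm Complex.I, mul_assoc, mul_comm Complex.I, ← mul_assoc, ← Complex.ofReal_mul,
    Complex.norm_exp_ofReal_mul_I, mul_one]

theorem summable_term (ha : Summable a) (t : ℝ) :
    Summable fun k => (a k : ℂ) * Complex.exp (Complex.I * 2 ^ (k + 1) * t) :=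
  .of_norm <| by simpa only [norm_term] using ha.abs

theorem norm_le (ha : Summable a) (t : ℝ) : ‖lacunarySeries a t‖ ≤ ∑' k, |a k| := by
  simpa only [lacunarySeries, norm_term] using
    norm_tsum_le_tsum_norm (by simpa only [norm_term] using ha.abs)
      (f := fun k => (a k : ℂ) * Complex.exp (Complex.I * 2 ^ (k + 1) * t))

theorem sub_neg_eq_tsum_sin (ha : Summable a) (h : ℝ) :
    lacunarySeries a (h / 2) - lacunarySeries a (-(h / 2)) =
      ((∑' k, 2 * a k * Real.sin (2 ^ k * h) : ℝ) : ℂ) * Complex.I := by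
  rw [lacunarySeries, lacunarySeries, ← (summable_term ha _).tsum_sub (summable_term ha _),
    Complex.ofReal_tsum, ← tsum_mul_right]
  refine tsum_congr fun k => ?_
  have hangle : ∀ s : ℝ, Complex.I * 2 ^ (k + 1) * ((s * (h / 2) : ℝ) : ℂ) =
      ((s * (2 ^ k * h) : ℝ) : ℂ) * Complex.I := fun s => by push_cast; ring
  rw [← one_mul (h / 2), ← neg_mul, hangle, hangle, Complex.exp_mul_I, Complex.exp_mul_I,
    neg_one_mul, one_mul, ← Complex.ofReal_cos, ← Complex.ofReal_sin, ← Complex.ofReal_cos,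
    ← Complex.ofReal_sin, Real.cos_neg, Real.sin_neg]
  push_cast
  ring

end lacunarySeries

theorem sin_two_pow_mul_pi_div_two_pow_nonneg (k m : ℕ) :
    0 ≤ Real.sin (2 ^ k * (π / 2 ^ m)) := by
  rcases le_or_gt m k with hmk | hkm
  · obtain ⟨j, rfl⟩ := Nat.exists_eq_add_of_le hmk
    have : (2 : ℝ) ^ (m + j) * (π / 2 ^ m) = ((2 ^ j : ℕ) : ℝ) * π := by
      push_cast
      field_simp
      ring
    rw [this, Real.sin_nat_mul_pi]
  · apply Real.sin_nonneg_of_nonneg_of_le_pi (by positivity)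
    calc (2 : ℝ) ^ k * (π / 2 ^ m) ≤ 2 ^ m * (π / 2 ^ m) := by
          gcongr
          exact one_le_two
      _ = π := by field_simp

theorem two_mul_le_norm_lacunarySeries_sub {a : ℕ → ℝ} (ha₀ : ∀ k, 0 ≤ a k) (ha : Summable a)
    (n : ℕ) :
    2 * a n ≤ ‖lacunarySeries a (π / 2 ^ (n + 1) / 2) -
      lacunarySeries a (-(π / 2 ^ (n + 1) / 2))‖ := by
  set h : ℝ := π / 2 ^ (n + 1)
  have hterm_nonneg : ∀ k, 0 ≤ 2 * a k * Real.sin (2 ^ k * h) := fun k =>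
    mul_nonneg (mul_nonneg zero_le_two (ha₀ k)) (sin_two_pow_mul_pi_div_two_pow_nonneg k (n + 1))
  have hsummable : Summable fun k => 2 * a k * Real.sin (2 ^ k * h) :=
    .of_nonneg_of_le hterm_nonneg
      (fun k => mul_le_of_le_one_right (mul_nonneg zero_le_two (ha₀ k)) (Real.sin_le_one _))
      (ha.mul_left 2)
  have hpeak : 2 * a n * Real.sin (2 ^ n * h) = 2 * a n := by
    have : (2 : ℝ) ^ n * h = π / 2 := by simp only [h]; field_simp; ring
    rw [this, Real.sin_pi_div_two, mul_one]
  rw [lacunarySeries.sub_neg_eq_tsum_sin ha, norm_mul, Complex.norm_I, mul_one,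
    Complex.norm_real, Real.norm_eq_abs, abs_of_nonneg (tsum_nonneg hterm_nonneg), ← hpeak]
  exact hsummable.le_tsum n fun k _ => hterm_nonneg k

theorem exists_pi_div_two_pow_le {δ : ℝ} (hδ₀ : 0 < δ) (hδ₁ : δ < Real.exp (-1)) :
    ∃ n : ℕ, π / 2 ^ (n + 1) ≤ δ ∧ (n : ℝ) + 1 ≤ 5 * |Real.log δ| := by
  have hlog : Real.log δ < -1 := by rwa [Real.log_lt_iff_lt_exp hδ₀]
  have hδ_lt_pi : δ < π :=
    hδ₁.trans <| (Real.exp_lt_one_iff.2 (by norm_num)).trans (by linarith [Real.pi_gt_three])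
  obtain ⟨n, hn, hn'⟩ := exists_nat_pow_near ((one_le_div hδ₀).2 hδ_lt_pi.le) one_lt_two
  refine ⟨n, ((div_le_iff₀ (by positivity)).2 ?_), ?_⟩
  · rw [div_lt_iff₀ hδ₀] at hn'
    linarith
  · have hlog_pow : n * Real.log 2 ≤ Real.log π - Real.log δ := by
      rw [← Real.log_pow, ← Real.log_div Real.pi_pos.ne' hδ₀.ne']
      exact Real.log_le_log (by positivity) hn
    have hlog_pi : Real.log π ≤ 2 * Real.log 2 := by
      rw [← Real.log_rpow two_pos]
      exact Real.log_le_log Real.pi_pos (by norm_num; linarith [Real.pi_le_four])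
    have hlog_two : 1 / 2 < Real.log 2 := by linarith [Real.log_two_gt_d9]
    rw [abs_of_neg (by linarith)]
    nlinarith

/-- Example 2.1, lower bound:
`ω[g](δ) ≥ C₁ |ln δ|^{-2Δ}` for `0 < δ < 1/e`. -/
theorem lacFun_modCont_lower (Δ : ℝ) (hΔ : 1 / 2 < Δ) :
    ∃ C₁ : ℝ, 0 < C₁ ∧ ∀ δ : ℝ, δ ∈ Set.Ioo (0 : ℝ) (Real.exp (-1)) →
      C₁ * |Real.log δ| ^ (-(2 * Δ)) ≤ modCont (lacFun Δ) δ := by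
  set a : ℕ → ℝ := fun k => ((k : ℝ) + 1) ^ (-(2 * Δ))
  have ha : Summable a := summable_nat_add_one_rpow (by linarith)
  refine ⟨2 * 5 ^ (-(2 * Δ)), by positivity, fun δ ⟨hδ₀, hδ₁⟩ => ?_⟩
  obtain ⟨n, hscale, hn⟩ := exists_pi_div_two_pow_le hδ₀ hδ₁
  have hincrement := norm_sub_le_modCont (lacunarySeries.norm_le ha) (t := -(π / 2 ^ (n + 1) / 2))
    (by rwa [abs_of_pos (by positivity)] : |π / 2 ^ (n + 1)| ≤ δ)
  rw [neg_add_eq_sub, sub_half] at hincrement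
  rw [lacFun_eq_lacunarySeries]
  calc 2 * 5 ^ (-(2 * Δ)) * |Real.log δ| ^ (-(2 * Δ))
      = 2 * (5 * |Real.log δ|) ^ (-(2 * Δ)) := by
        rw [Real.mul_rpow (by norm_num) (abs_nonneg _), mul_assoc]
    _ ≤ 2 * a n := by
        gcongr
        exact Real.rpow_le_rpow_of_nonpos (by positivity) hn (by linarith)
    _ ≤ _ := two_mul_le_norm_lacunarySeries_sub (fun k => by positivity) ha n
    _ ≤ _ := hincrement
end

section
/- For Δ > 1, the lacunary function g(t) = Σ_{k=1}^∞ k^{−2Δ}·exp(i·2^k·t) has modulus of continuity bounded above: there exists C₂ < ∞ such that ω[g](δ) ≤ C₂·|ln δ|^{1−2Δ} for all δ ∈ (0, 1/e). -/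
open Complex Real

/-!
For `|h| ≤ δ` the `k`-th term of `g (t + h) - g t` has modulus at most
`(k + 1)^(-2Δ) · min 2 (2^(k+1) δ)`. Split the series at the `K ≈ |ln δ| / ln 2` with
`2^K δ ≤ 1`. Since `2^k` grows geometrically, the head `δ ∑_{k<K} (k + 1)^(-2Δ) 2^k` is dominated by
its last terms and is `O(δ 2^K K^(-2Δ)) = O(K^(-2Δ))`. The tail is at most
`2 ∑_{k≥K} (k + 1)^(-2Δ) = O(K^(1-2Δ))` by the integral test. Finally `K ≥ |ln δ| / 2`.
-/

open Finset

theorem norm_exp_I_mul_sub_exp_I_mul_le (x y : ℝ) :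
    ‖exp (I * x) - exp (I * y)‖ ≤ min 2 |x - y| := by
  have hfactor : exp (I * x) - exp (I * y) = exp (I * y) * (exp (I * ↑(x - y)) - 1) := by
    rw [mul_sub, mul_one, ← Complex.exp_add]; congr 2; push_cast; ring
  refine le_min ?_ ?_
  · calc ‖exp (I * x) - exp (I * y)‖ ≤ ‖exp (I * x)‖ + ‖exp (I * y)‖ := norm_sub_le _ _
      _ = 2 := by rw [norm_exp_I_mul_ofReal, norm_exp_I_mul_ofReal]; norm_num
  · rw [hfactor, norm_mul, norm_exp_I_mul_ofReal, one_mul, ← Real.norm_eq_abs]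
    exact Real.norm_exp_I_mul_ofReal_sub_one_le

theorem norm_tsum_exp_I_mul_sub_le {a : ℕ → ℂ} (ha : Summable fun k => ‖a k‖) (ν : ℕ → ℝ)
    (t h : ℝ) :
    ‖∑' k, a k * exp (I * ν k * ↑(t + h)) - ∑' k, a k * exp (I * ν k * t)‖ ≤
      ∑' k, ‖a k‖ * min 2 |ν k * h| := by
  have hnorm (x : ℝ) (k : ℕ) : ‖a k * exp (I * ν k * x)‖ = ‖a k‖ := by
    rw [norm_mul, mul_assoc, ← ofReal_mul, norm_exp_I_mul_ofReal, mul_one]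
  have hsum (x : ℝ) : Summable fun k => a k * exp (I * ν k * x) :=
    Summable.of_norm (by simpa only [hnorm] using ha)
  have hterm (k : ℕ) :
      ‖a k * exp (I * ν k * ↑(t + h)) - a k * exp (I * ν k * t)‖ ≤ ‖a k‖ * min 2 |ν k * h| := by
    rw [← mul_sub, norm_mul, mul_assoc, mul_assoc, ← ofReal_mul, ← ofReal_mul]
    gcongr
    simpa only [← mul_sub, add_sub_cancel_left] using
      norm_exp_I_mul_sub_exp_I_mul_le (ν k * (t + h)) (ν k * t)
  have hmaj : Summable fun k => ‖a k‖ * min 2 |ν k * h| :=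
    Summable.of_nonneg_of_le (fun k => by positivity)
      (fun k => mul_le_mul_of_nonneg_left (min_le_left _ _) (norm_nonneg _)) (ha.mul_right 2)
  rw [← (hsum (t + h)).tsum_sub (hsum t)]
  exact tsum_of_norm_bounded hmaj.hasSum hterm

theorem summable_nat_add_one_rpow_neg {p : ℝ} (hp : 1 < p) :
    Summable fun k : ℕ => ((k : ℝ) + 1) ^ (-p) := by
  have := (summable_nat_add_iff 1).mpr (Real.summable_nat_rpow.mpr (neg_lt_neg hp))
  exact_mod_cast this

theorem summable_nat_add_one_rpow_mul_geometric (p : ℝ) {r : ℝ} (hr₀ : 0 < r) (hr₁ : r < 1) :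
    Summable fun j : ℕ => ((j : ℝ) + 1) ^ p * r ^ j := by
  have hgeom : Summable fun j : ℕ => ((j + 1 : ℕ) : ℝ) ^ ⌈p⌉₊ * r ^ (j + 1) :=
    (summable_nat_add_iff (f := fun n : ℕ => (n : ℝ) ^ ⌈p⌉₊ * r ^ n) 1).mpr <|
      summable_pow_mul_geometric_of_norm_lt_one _ <| by rwa [Real.norm_of_nonneg hr₀.le]
  refine Summable.of_nonneg_of_le (fun j => by positivity) (fun j => ?_) (hgeom.mul_left r⁻¹)
  have hbase : (1 : ℝ) ≤ j + 1 := by linarith [j.cast_nonneg (α := ℝ)]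
  calc ((j : ℝ) + 1) ^ p * r ^ j ≤ ((j : ℝ) + 1) ^ (⌈p⌉₊ : ℝ) * r ^ j := by
        gcongr
        exact Nat.le_ceil p
    _ = r⁻¹ * (((j + 1 : ℕ) : ℝ) ^ ⌈p⌉₊ * r ^ (j + 1)) := by
        rw [Real.rpow_natCast, pow_succ]; push_cast; field_simp

theorem sum_range_rpow_neg_mul_pow_le {p r : ℝ} (hp : 0 ≤ p) (hr : 1 < r) (K : ℕ) :
    ∑ k ∈ range K, ((k : ℝ) + 1) ^ (-p) * r ^ k ≤
      (∑' j : ℕ, ((j : ℝ) + 1) ^ p * r⁻¹ ^ j) * (r ^ K * (K : ℝ) ^ (-p)) := by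
  rw [← sum_range_reflect]
  have hterm (j : ℕ) (hj : j ∈ range K) : (((K - 1 - j : ℕ) : ℝ) + 1) ^ (-p) * r ^ (K - 1 - j) ≤
      ((j : ℝ) + 1) ^ p * r⁻¹ ^ j * (r ^ K * (K : ℝ) ^ (-p)) := by
    have hjK : j < K := mem_range.mp hj
    have hjK' : (j : ℝ) + 1 ≤ K := by exact_mod_cast hjK
    have hcast : ((K - 1 - j : ℕ) : ℝ) + 1 = K - j := by
      rw [Nat.cast_sub (by omega), Nat.cast_sub (by omega)]; push_cast; ring
    have hKj : (0 : ℝ) < K - j := by linarith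
    have hprod : (K : ℝ) ≤ (j + 1) * (K - j) := by nlinarith [j.cast_nonneg (α := ℝ)]
    have hdecay : ((K : ℝ) - j) ^ (-p) ≤ ((j : ℝ) + 1) ^ p * (K : ℝ) ^ (-p) := calc
      ((K : ℝ) - j) ^ (-p) = ((j : ℝ) + 1) ^ p * (((j : ℝ) + 1) * (K - j)) ^ (-p) := by
        rw [mul_rpow (by positivity) hKj.le, ← mul_assoc, ← rpow_add (by positivity),
          add_neg_cancel, rpow_zero, one_mul]
      _ ≤ ((j : ℝ) + 1) ^ p * (K : ℝ) ^ (-p) :=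
        mul_le_mul_of_nonneg_left (rpow_le_rpow_of_nonpos (by linarith) hprod
          (neg_nonpos.mpr hp)) (by positivity)
    have hgrowth : r ^ (K - 1 - j) ≤ r⁻¹ ^ j * r ^ K := calc
      r ^ (K - 1 - j) ≤ r ^ (K - j) := pow_le_pow_right₀ hr.le (by omega)
      _ = r⁻¹ ^ j * r ^ K := by rw [pow_sub₀ _ (by positivity) hjK.le, inv_pow, mul_comm]
    rw [hcast]
    calc ((K : ℝ) - j) ^ (-p) * r ^ (K - 1 - j)
        ≤ (((j : ℝ) + 1) ^ p * (K : ℝ) ^ (-p)) * (r⁻¹ ^ j * r ^ K) :=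
          mul_le_mul hdecay hgrowth (by positivity) (by positivity)
      _ = ((j : ℝ) + 1) ^ p * r⁻¹ ^ j * (r ^ K * (K : ℝ) ^ (-p)) := by ring
  calc ∑ j ∈ range K, (((K - 1 - j : ℕ) : ℝ) + 1) ^ (-p) * r ^ (K - 1 - j)
      ≤ ∑ j ∈ range K, ((j : ℝ) + 1) ^ p * r⁻¹ ^ j * (r ^ K * (K : ℝ) ^ (-p)) := sum_le_sum hterm
    _ = (∑ j ∈ range K, ((j : ℝ) + 1) ^ p * r⁻¹ ^ j) * (r ^ K * (K : ℝ) ^ (-p)) := by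
        rw [sum_mul]
    _ ≤ (∑' j : ℕ, ((j : ℝ) + 1) ^ p * r⁻¹ ^ j) * (r ^ K * (K : ℝ) ^ (-p)) := by
        gcongr
        exact (summable_nat_add_one_rpow_mul_geometric p (by positivity)
          (inv_lt_one_of_one_lt₀ hr)).sum_le_tsum _ fun _ _ => by positivity

theorem tsum_nat_add_rpow_neg_le {p : ℝ} (hp : 1 < p) {K : ℕ} (hK : 0 < K) :
    ∑' k : ℕ, (((k + K : ℕ) : ℝ) + 1) ^ (-p) ≤ (K : ℝ) ^ (1 - p) / (p - 1) := by
  have hK' : (0 : ℝ) < K := by exact_mod_cast hK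
  have h := AntitoneOn.tsum_comp_add_le_integral (f := fun x : ℝ => x ^ (-p)) K
    ((antitoneOn_rpow_Ioi_of_exponent_nonpos (by linarith)).mono fun x hx => hK'.trans_le hx)
    (integrableOn_Ioi_rpow_of_lt (by linarith) hK')
    (fun x hx => rpow_nonneg (hK'.trans hx).le _)
  rw [integral_Ioi_rpow_of_lt (by linarith) hK'] at h
  convert h using 1
  · push_cast; rfl
  · rw [show -p + 1 = 1 - p by ring, neg_div, ← div_neg, neg_sub]

theorem summable_nat_add_one_rpow_neg_mul_min {p : ℝ} (hp : 1 < p) {δ : ℝ} (hδ : 0 ≤ δ) :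
    Summable fun k : ℕ => ((k : ℝ) + 1) ^ (-p) * min 2 (2 ^ (k + 1) * δ) :=
  Summable.of_nonneg_of_le (fun k => by positivity)
    (fun k => mul_le_mul_of_nonneg_left (min_le_left _ _) (by positivity))
    ((summable_nat_add_one_rpow_neg hp).mul_right 2)

theorem sum_range_rpow_neg_mul_min_two_pow_le {p : ℝ} (hp : 0 ≤ p) {K : ℕ} {δ : ℝ} (hδ : 0 ≤ δ)
    (hKδ : 2 ^ K * δ ≤ 1) :
    ∑ k ∈ range K, ((k : ℝ) + 1) ^ (-p) * min 2 (2 ^ (k + 1) * δ) ≤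
      2 * (∑' j : ℕ, ((j : ℝ) + 1) ^ p * 2⁻¹ ^ j) * (K : ℝ) ^ (-p) := calc
  _ ≤ ∑ k ∈ range K, ((k : ℝ) + 1) ^ (-p) * 2 ^ k * (2 * δ) := sum_le_sum fun k _ => by
      rw [mul_assoc, pow_succ, mul_assoc]
      exact mul_le_mul_of_nonneg_left (min_le_right _ _) (by positivity)
  _ = 2 * δ * ∑ k ∈ range K, ((k : ℝ) + 1) ^ (-p) * 2 ^ k := by rw [← sum_mul, mul_comm]
  _ ≤ 2 * δ * ((∑' j : ℕ, ((j : ℝ) + 1) ^ p * 2⁻¹ ^ j) * (2 ^ K * (K : ℝ) ^ (-p))) := by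
      gcongr
      exact sum_range_rpow_neg_mul_pow_le hp one_lt_two K
  _ = 2 * (∑' j : ℕ, ((j : ℝ) + 1) ^ p * 2⁻¹ ^ j) * (K : ℝ) ^ (-p) * (2 ^ K * δ) := by ring
  _ ≤ 2 * (∑' j : ℕ, ((j : ℝ) + 1) ^ p * 2⁻¹ ^ j) * (K : ℝ) ^ (-p) :=
      mul_le_of_le_one_right (by positivity) hKδ

theorem tsum_nat_add_rpow_neg_mul_min_two_pow_le {p : ℝ} (hp : 1 < p) {K : ℕ} (hK : 0 < K)
    {δ : ℝ} (hδ : 0 ≤ δ) :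
    ∑' k : ℕ, (((k + K : ℕ) : ℝ) + 1) ^ (-p) * min 2 (2 ^ (k + K + 1) * δ) ≤
      2 / (p - 1) * (K : ℝ) ^ (1 - p) := by
  have hle (k : ℕ) : (((k + K : ℕ) : ℝ) + 1) ^ (-p) * min 2 (2 ^ (k + K + 1) * δ) ≤
      2 * (((k + K : ℕ) : ℝ) + 1) ^ (-p) := by
    rw [mul_comm 2]; exact mul_le_mul_of_nonneg_left (min_le_left _ _) (by positivity)
  calc _ ≤ ∑' k : ℕ, 2 * (((k + K : ℕ) : ℝ) + 1) ^ (-p) :=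
        Summable.tsum_le_tsum hle
          ((summable_nat_add_iff K).mpr (summable_nat_add_one_rpow_neg_mul_min hp hδ))
          (((summable_nat_add_iff K).mpr (summable_nat_add_one_rpow_neg hp)).mul_left 2)
    _ = 2 * ∑' k : ℕ, (((k + K : ℕ) : ℝ) + 1) ^ (-p) := tsum_mul_left
    _ ≤ 2 * ((K : ℝ) ^ (1 - p) / (p - 1)) := by gcongr; exact tsum_nat_add_rpow_neg_le hp hK
    _ = 2 / (p - 1) * (K : ℝ) ^ (1 - p) := by ring

theorem tsum_rpow_neg_mul_min_two_pow_le {p : ℝ} (hp : 1 < p) {K : ℕ} (hK : 0 < K) {δ : ℝ}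
    (hδ : 0 ≤ δ) (hKδ : 2 ^ K * δ ≤ 1) :
    ∑' k : ℕ, ((k : ℝ) + 1) ^ (-p) * min 2 (2 ^ (k + 1) * δ) ≤
      (2 * ∑' j : ℕ, ((j : ℝ) + 1) ^ p * 2⁻¹ ^ j + 2 / (p - 1)) * (K : ℝ) ^ (1 - p) := by
  have hhead := sum_range_rpow_neg_mul_min_two_pow_le (p := p) (by linarith) hδ hKδ
  have htail := tsum_nat_add_rpow_neg_mul_min_two_pow_le hp hK hδ
  have hexp : (K : ℝ) ^ (-p) ≤ (K : ℝ) ^ (1 - p) :=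
    rpow_le_rpow_of_exponent_le (by exact_mod_cast hK) (by linarith)
  have hB : 0 ≤ ∑' j : ℕ, ((j : ℝ) + 1) ^ p * 2⁻¹ ^ j := by positivity
  rw [← (summable_nat_add_one_rpow_neg_mul_min hp hδ).sum_add_tsum_nat_add K]
  nlinarith

theorem exists_nat_two_pow_mul_le_one {δ : ℝ} (hδ₀ : 0 < δ) (hδ₁ : δ < Real.exp (-1)) :
    ∃ K : ℕ, 0 < K ∧ 2 ^ K * δ ≤ 1 ∧ 2⁻¹ * |Real.log δ| ≤ K := by
  set L := |Real.log δ|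
  have hlogδ : Real.log δ < -1 := by
    rwa [← Real.log_exp (-1), Real.log_lt_log_iff hδ₀ (Real.exp_pos _)]
  have hL : L = -Real.log δ := abs_of_neg (by linarith)
  have hlog2₀ : 0 < Real.log 2 := Real.log_pos one_lt_two
  have hlog2₁ : Real.log 2 < 1 := by linarith [Real.log_two_lt_d9]
  have hx : 1 ≤ L / Real.log 2 := by rw [le_div_iff₀ hlog2₀]; linarith
  refine ⟨⌊L / Real.log 2⌋₊, Nat.floor_pos.mpr hx, ?_, ?_⟩
  · have hpow : (2 : ℝ) ^ ⌊L / Real.log 2⌋₊ ≤ Real.exp L := by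
      rw [← rpow_natCast, rpow_def_of_pos two_pos, Real.exp_le_exp, mul_comm,
        ← le_div_iff₀ hlog2₀]
      exact Nat.floor_le (by positivity)
    calc (2 : ℝ) ^ ⌊L / Real.log 2⌋₊ * δ ≤ Real.exp L * δ := by gcongr
      _ = 1 := by rw [hL, Real.exp_neg, Real.exp_log hδ₀, inv_mul_cancel₀ hδ₀.ne']
  · have := Nat.div_two_lt_floor hx
    have : L ≤ L / Real.log 2 := le_div_self (abs_nonneg _) hlog2₀ hlog2₁.le
    linarith

theorem modCont_le_of_forall {f : ℝ → ℂ} {δ M : ℝ} (hδ : 0 ≤ δ)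
    (hM : ∀ t h, |h| ≤ δ → ‖f (t + h) - f t‖ ≤ M) : modCont f δ ≤ M :=
  csSup_le ⟨_, 0, 0, by simpa using hδ, rfl⟩ fun _ ⟨t, h, hh, hy⟩ => hy ▸ hM t h hh

theorem norm_lacFun_sub_le {Δ δ : ℝ} (hΔ : 1 < 2 * Δ) (t h : ℝ) (hh : |h| ≤ δ) :
    ‖lacFun Δ (t + h) - lacFun Δ t‖ ≤
      ∑' k : ℕ, ((k : ℝ) + 1) ^ (-(2 * Δ)) * min 2 (2 ^ (k + 1) * δ) := by
  have hlac (x : ℝ) : lacFun Δ x = ∑' k : ℕ, (((k : ℝ) + 1) ^ (-(2 * Δ)) : ℝ) *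
      exp (I * ((2 ^ (k + 1) : ℝ) : ℂ) * x) := by
    push_cast; rfl
  have hnorm (k : ℕ) : ‖((((k : ℝ) + 1) ^ (-(2 * Δ)) : ℝ) : ℂ)‖ = ((k : ℝ) + 1) ^ (-(2 * Δ)) := by
    rw [norm_real, norm_of_nonneg (by positivity)]
  have hle (k : ℕ) : ‖((((k : ℝ) + 1) ^ (-(2 * Δ)) : ℝ) : ℂ)‖ * min 2 |2 ^ (k + 1) * h| ≤
      ((k : ℝ) + 1) ^ (-(2 * Δ)) * min 2 (2 ^ (k + 1) * δ) := by
    rw [hnorm, abs_mul, abs_of_pos (by positivity)]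
    gcongr
  have hmaj := summable_nat_add_one_rpow_neg_mul_min hΔ ((abs_nonneg h).trans hh)
  rw [hlac, hlac]
  exact (norm_tsum_exp_I_mul_sub_le (by simpa only [hnorm] using summable_nat_add_one_rpow_neg hΔ)
    _ t h).trans <| Summable.tsum_le_tsum hle
      (hmaj.of_nonneg_of_le (fun k => by positivity) hle) hmaj

/-- Example 2.1, upper bound:
`ω[g](δ) ≤ C₂ |ln δ|^{1-2Δ}` for `0 < δ < 1/e`. -/
theorem lacFun_modCont_upper (Δ : ℝ) (hΔ : 1 < Δ) :
    ∃ C₂ : ℝ, 0 < C₂ ∧ ∀ δ : ℝ, δ ∈ Set.Ioo (0 : ℝ) (Real.exp (-1)) →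
      modCont (lacFun Δ) δ ≤ C₂ * |Real.log δ| ^ (1 - 2 * Δ) := by
  have hp : 1 < 2 * Δ := by linarith
  have hC : 0 < 2 * ∑' j : ℕ, ((j : ℝ) + 1) ^ (2 * Δ) * 2⁻¹ ^ j + 2 / (2 * Δ - 1) := by positivity
  set C := 2 * ∑' j : ℕ, ((j : ℝ) + 1) ^ (2 * Δ) * 2⁻¹ ^ j + 2 / (2 * Δ - 1)
  refine ⟨C * 2⁻¹ ^ (1 - 2 * Δ), by positivity, ?_⟩
  rintro δ ⟨hδ₀, hδ₁⟩
  obtain ⟨K, hK, hKδ, hLK⟩ := exists_nat_two_pow_mul_le_one hδ₀ hδ₁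
  have hL : 0 < |Real.log δ| :=
    abs_pos.mpr (Real.log_neg hδ₀ (hδ₁.trans (Real.exp_lt_one_iff.mpr (by norm_num)))).ne
  refine modCont_le_of_forall hδ₀.le fun t h hh => ?_
  calc ‖lacFun Δ (t + h) - lacFun Δ t‖
      ≤ ∑' k : ℕ, ((k : ℝ) + 1) ^ (-(2 * Δ)) * min 2 (2 ^ (k + 1) * δ) :=
        norm_lacFun_sub_le hp t h hh
    _ ≤ C * (K : ℝ) ^ (1 - 2 * Δ) := tsum_rpow_neg_mul_min_two_pow_le hp hK hδ₀.le hKδ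
    _ ≤ C * (2⁻¹ * |Real.log δ|) ^ (1 - 2 * Δ) :=
        mul_le_mul_of_nonneg_left (rpow_le_rpow_of_nonpos (by positivity) hLK (by linarith)) hC.le
    _ = C * 2⁻¹ ^ (1 - 2 * Δ) * |Real.log δ| ^ (1 - 2 * Δ) := by
        rw [mul_rpow (by norm_num) hL.le, mul_assoc]
end
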